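/- Fix n ≥ 2 and an index 1 ≤ i < n with j = i+1. For a real number q, let R_i(q) be the matrix indexed by 𝓔ₙ defined row-wise by: row (i,j) is q²·e_{ij}; row (k,l) is e_{kl} whenever {k,l} ∩ {i,j} = ∅ or {k,l} contains j but not i; and row (k,l) is (q²−q)·e_{ij} + q·e_{im} + (1−q)·e_{jm} whenever {k,l} = {i,m} with m ∉ {i,j}. Then for all real numbers q and q′ one has R_i(q)·R_i(q′) = R_i(q·q′). In particular R_i(1) is the identity matrix, and for q ≠ 0 the matrix R_i(q) is invertible with inverse R_i(q⁻¹). -/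

import Mathlib

/-- The index set `𝓔ₙ` of edges: pairs `(k,l)` with `k < l` in `Fin n`. -/
abbrev EdgeIdx (n : ℕ) : Type := {p : Fin n × Fin n // p.1 < p.2}

/-- The standard basis vector `e_{ab}` of `ℝ^{𝓔ₙ}`, viewed symmetrically in `a, b`
(with the convention `e_{mm} = 0`). -/
def eVec {n : ℕ} (a b : Fin n) : EdgeIdx n → ℝ :=
  fun c => if (c.1.1 = a ∧ c.1.2 = b) ∨ (c.1.1 = b ∧ c.1.2 = a) then 1 else 0

/-- The edge rescaling matrix `R_i(q) = R^{i,j}_{rc(i,j)}` (with `j = i+1`), rescaling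
the edge `e_{ij}` by `q` while fixing the edges of the right complement: row `(i,j)` is
`q²·e_{ij}`; rows `{k,l}` with `{k,l} ∩ {i,j} = ∅` or containing `j` but not `i` are
`e_{kl}`; and row `{i,m}` with `m ∉ {i,j}` is
`(q²−q)·e_{ij} + q·e_{im} + (1−q)·e_{jm}`. -/
def rcRescaleMatrix (n : ℕ) (i j : Fin n) (q : ℝ) : Matrix (EdgeIdx n) (EdgeIdx n) ℝ :=
  fun r c =>
    if r.1.1 = i ∧ r.1.2 = j then q ^ 2 * eVec i j c
    else if r.1.1 = i then
      (q ^ 2 - q) * eVec i j c + q * eVec i r.1.2 c + (1 - q) * eVec j r.1.2 c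
    else if r.1.2 = i then
      (q ^ 2 - q) * eVec i j c + q * eVec i r.1.1 c + (1 - q) * eVec j r.1.1 c
    else eVec r.1.1 r.1.2 c

/-!
Row `{i,m}` of `R_i(q)` is `(q²−q)e_{ij} + q e_{im} + (1−q)e_{jm}` (at `m = j` this is
`q² e_{ij}`), and every other row is a basis vector fixed by `R_i(q′)`. Multiplying such a
row by `R_i(q′)` substitutes rows of `R_i(q′)` for basis vectors, and the coefficients compose:
`(q²−q)q′² + q(q′²−q′) = (qq′)² − qq′`, `q·q′` and `q(1−q′) + (1−q) = 1 − qq′`.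
-/

open Matrix

section eVec

variable {n : ℕ}

lemma eVec_comm (a b : Fin n) : eVec a b = eVec b a := by
  funext c
  simp only [eVec, or_comm]

@[simp]
lemma eVec_self (a : Fin n) : eVec a a = 0 := by
  funext c
  simp only [eVec, or_self, Pi.zero_apply, ite_eq_right_iff, one_ne_zero, imp_false, not_and]
  exact fun h₁ h₂ => c.2.ne (h₁.trans h₂.symm)

lemma eVec_eq_single (r : EdgeIdx n) : eVec r.1.1 r.1.2 = Pi.single r 1 := by
  funext c
  obtain ⟨⟨a, b⟩, hab⟩ := r
  obtain ⟨⟨x, y⟩, hxy⟩ := c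
  by_cases h : x = a ∧ y = b
  · obtain ⟨rfl, rfl⟩ := h
    simp [eVec]
  · have hne : (⟨(x, y), hxy⟩ : EdgeIdx n) ≠ ⟨(a, b), hab⟩ := by simpa using h
    have hflip : ¬ (x = b ∧ y = a) := fun ⟨hx, hy⟩ => lt_asymm hab (hx ▸ hy ▸ hxy)
    simp [eVec, hne, h, hflip]

lemma eVec_vecMul (r : EdgeIdx n) (M : Matrix (EdgeIdx n) (EdgeIdx n) ℝ) :
    eVec r.1.1 r.1.2 ᵥ* M = M r := by
  rw [eVec_eq_single, single_one_vecMul, row]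

end eVec

section rescale

variable {n : ℕ} (i j : Fin n)

/-- The row of `R_i(q)` at the edge `{i, m}`, in either orientation and including `m = j`. -/
def rescaleRow (q : ℝ) (m : Fin n) : EdgeIdx n → ℝ :=
  (q ^ 2 - q) • eVec i j + q • eVec i m + (1 - q) • eVec j m

lemma rescaleRow_right (q : ℝ) : rescaleRow i j q j = q ^ 2 • eVec i j := by
  simp only [rescaleRow, eVec_self, smul_zero, add_zero]
  module

lemma rescaleRow_one (m : Fin n) : rescaleRow i j 1 m = eVec i m := by
  simp [rescaleRow]

variable {i j} (q : ℝ) {r : EdgeIdx n}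

lemma rcRescaleMatrix_apply_of_fst_eq (h : r.1.1 = i) :
    rcRescaleMatrix n i j q r = rescaleRow i j q r.1.2 := by
  funext c
  by_cases hj : r.1.2 = j
  · rw [hj, rescaleRow_right]
    simp [rcRescaleMatrix, h, hj]
  · simp [rcRescaleMatrix, rescaleRow, h, hj]

lemma rcRescaleMatrix_apply_of_snd_eq (h : r.1.2 = i) :
    rcRescaleMatrix n i j q r = rescaleRow i j q r.1.1 := by
  funext c
  have : r.1.1 ≠ i := h ▸ r.2.ne
  simp [rcRescaleMatrix, rescaleRow, h, this]

lemma rcRescaleMatrix_apply_of_ne (h₁ : r.1.1 ≠ i) (h₂ : r.1.2 ≠ i) :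
    rcRescaleMatrix n i j q r = eVec r.1.1 r.1.2 := by
  funext c
  simp [rcRescaleMatrix, h₁, h₂]

lemma eVec_vecMul_rcRescaleMatrix_of_ne {a b : Fin n} (ha : a ≠ i) (hb : b ≠ i) :
    eVec a b ᵥ* rcRescaleMatrix n i j q = eVec a b := by
  rcases lt_trichotomy a b with hab | rfl | hab
  · exact (eVec_vecMul ⟨(a, b), hab⟩ _).trans (rcRescaleMatrix_apply_of_ne q ha hb)
  · simp
  · rw [eVec_comm]
    exact (eVec_vecMul ⟨(b, a), hab⟩ _).trans (rcRescaleMatrix_apply_of_ne q hb ha)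

lemma eVec_vecMul_rcRescaleMatrix {m : Fin n} (hm : m ≠ i) :
    eVec i m ᵥ* rcRescaleMatrix n i j q = rescaleRow i j q m := by
  rcases hm.lt_or_gt with hmi | him
  · rw [eVec_comm]
    exact (eVec_vecMul ⟨(m, i), hmi⟩ _).trans (rcRescaleMatrix_apply_of_snd_eq q rfl)
  · exact (eVec_vecMul ⟨(i, m), him⟩ _).trans (rcRescaleMatrix_apply_of_fst_eq q rfl)

lemma rescaleRow_vecMul_rcRescaleMatrix (hij : i ≠ j) (q' : ℝ) {m : Fin n} (hm : m ≠ i) :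
    rescaleRow i j q m ᵥ* rcRescaleMatrix n i j q' = rescaleRow i j (q * q') m := by
  simp only [rescaleRow, add_vecMul, smul_vecMul]
  rw [eVec_vecMul_rcRescaleMatrix q' hij.symm, rescaleRow_right,
    eVec_vecMul_rcRescaleMatrix q' hm, eVec_vecMul_rcRescaleMatrix_of_ne q' hij.symm hm,
    rescaleRow]
  module

lemma rcRescaleMatrix_mul_rcRescaleMatrix (hij : i ≠ j) (q' : ℝ) :
    rcRescaleMatrix n i j q * rcRescaleMatrix n i j q' = rcRescaleMatrix n i j (q * q') := by
  funext r
  rw [mul_apply_eq_vecMul]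
  by_cases h₁ : r.1.1 = i
  · have hm : r.1.2 ≠ i := h₁ ▸ r.2.ne'
    rw [rcRescaleMatrix_apply_of_fst_eq q h₁, rcRescaleMatrix_apply_of_fst_eq _ h₁,
      rescaleRow_vecMul_rcRescaleMatrix q hij q' hm]
  by_cases h₂ : r.1.2 = i
  · have hm : r.1.1 ≠ i := h₂ ▸ r.2.ne
    rw [rcRescaleMatrix_apply_of_snd_eq q h₂, rcRescaleMatrix_apply_of_snd_eq _ h₂,
      rescaleRow_vecMul_rcRescaleMatrix q hij q' hm]
  rw [rcRescaleMatrix_apply_of_ne q h₁ h₂, rcRescaleMatrix_apply_of_ne _ h₁ h₂,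
    eVec_vecMul_rcRescaleMatrix_of_ne q' h₁ h₂]

variable (i j) in
lemma rcRescaleMatrix_one : rcRescaleMatrix n i j 1 = 1 := by
  funext r
  have hr : rcRescaleMatrix n i j 1 r = eVec r.1.1 r.1.2 := by
    by_cases h₁ : r.1.1 = i
    · rw [rcRescaleMatrix_apply_of_fst_eq 1 h₁, rescaleRow_one, h₁]
    by_cases h₂ : r.1.2 = i
    · rw [rcRescaleMatrix_apply_of_snd_eq 1 h₂, rescaleRow_one, h₂, eVec_comm]
    exact rcRescaleMatrix_apply_of_ne 1 h₁ h₂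
  rw [hr, eVec_eq_single]
  funext c
  exact one_eq_pi_single.symm

end rescale

theorem rcRescaleMatrix_mul_general (n : ℕ) (i j : Fin n)
    (hij : (i : ℕ) + 1 = (j : ℕ)) :
    (∀ q q' : ℝ, rcRescaleMatrix n i j q * rcRescaleMatrix n i j q'
      = rcRescaleMatrix n i j (q * q')) ∧
    rcRescaleMatrix n i j 1 = 1 ∧
    (∀ q : ℝ, q ≠ 0 →
      rcRescaleMatrix n i j q * rcRescaleMatrix n i j q⁻¹ = 1 ∧
      rcRescaleMatrix n i j q⁻¹ * rcRescaleMatrix n i j q = 1) := by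
  have hne : i ≠ j := Fin.ne_of_val_ne (by omega)
  have hmul := fun q q' => rcRescaleMatrix_mul_rcRescaleMatrix q hne q'
  refine ⟨hmul, rcRescaleMatrix_one i j, fun q hq => ⟨?_, ?_⟩⟩
  · rw [hmul, mul_inv_cancel₀ hq, rcRescaleMatrix_one]
  · rw [hmul, inv_mul_cancel₀ hq, rcRescaleMatrix_one]

/-- **Edge rescaling maps compose and are invertible.** For `j = i+1`, the rescaling
matrices satisfy `R_i(q)·R_i(q′) = R_i(q·q′)`; in particular `R_i(1)` is the identity
and, for `q ≠ 0`, `R_i(q)` is invertible with inverse `R_i(q⁻¹)`. -/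
theorem rcRescaleMatrix_mul (n : ℕ) (hn : 2 ≤ n) (i j : Fin n)
    (hij : (i : ℕ) + 1 = (j : ℕ)) :
    (∀ q q' : ℝ, rcRescaleMatrix n i j q * rcRescaleMatrix n i j q'
      = rcRescaleMatrix n i j (q * q')) ∧
    rcRescaleMatrix n i j 1 = 1 ∧
    (∀ q : ℝ, q ≠ 0 →
      rcRescaleMatrix n i j q * rcRescaleMatrix n i j q⁻¹ = 1 ∧
      rcRescaleMatrix n i j q⁻¹ * rcRescaleMatrix n i j q = 1) :=
  rcRescaleMatrix_mul_general n i j hij
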